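/- Let n ≥ 1 and let Λ = {λ_1 > λ_2 > … > λ_n > 0} be distinct positive reals. Define φ : T_Λ → ℝ^n by φ(H) = (U(1,1),…,U(1,n)), the first row of the unique orthogonal matrix U with H = U diag(λ_1,…,λ_n) Uᵀ and U(1,j) > 0 for all j. Then φ is a bijection from T_Λ onto S^{n−1}_{>0} = { x ∈ ℝ^n : ∑_{i=1}^n x_i² = 1 and x_i > 0 for all i }. -/

import Mathlib

open Matrix

/-- A matrix is tridiagonal: entries vanish when the indices differ by more than one. -/
def IsTridiagonal {n : ℕ} (H : Matrix (Fin n) (Fin n) ℝ) : Prop :=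
  ∀ i j : Fin n, ((i : ℕ) + 1 < (j : ℕ) ∨ (j : ℕ) + 1 < (i : ℕ)) → H i j = 0

/-- The set `T_Λ` of `n × n` real symmetric tridiagonal matrices with negative sub-diagonal
entries whose spectrum equals `Λ = {λs 0, …, λs (n-1)}`. -/
def TLam {n : ℕ} (lams : Fin n → ℝ) : Set (Matrix (Fin n) (Fin n) ℝ) :=
  {H | H.IsSymm ∧ IsTridiagonal H ∧
    (∀ i j : Fin n, (j : ℕ) + 1 = (i : ℕ) → H i j < 0) ∧
    spectrum ℝ H = Set.range lams}

/-- The open positive orthant `S^{n-1}_{>0}` of the unit sphere in `ℝⁿ`. -/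
def SposSet (n : ℕ) : Set (Fin n → ℝ) :=
  {x | (∑ i, x i ^ 2) = 1 ∧ ∀ i, 0 < x i}

/-!
The rows `u₀, …, u_{n-1}` of a diagonalizer `U` of `H` form an orthonormal basis of `ℝⁿ` in which
`D = diag(λ)` acts by `H`. When `H` is tridiagonal this is the three-term recurrence
`H_{j+1,j} u_{j+1} = D u_j - H_{jj} u_j - H_{j-1,j} u_{j-1}`, and since `H_{j+1,j} < 0` and
`‖u_{j+1}‖ = 1` it determines every row from `u₀`: this gives injectivity. Conversely, for `x` in
the positive orthant the Krylov vectors `(-D)ᵏ x`, `k < n`, are independent (Vandermonde), and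
Gram–Schmidt turns them into an orthonormal basis in which `D` is tridiagonal with negative
subdiagonal (the Lanczos process); its first vector is `x`. Since the eigenvalues are simple, a
diagonalizer with positive first row is unique, so `φ` of the resulting matrix is `x`.
-/

open Set Function InnerProductSpace

namespace Matrix

variable {ι : Type*} [Fintype ι] [DecidableEq ι]

lemma sum_sq_row_eq_one {U : Matrix ι ι ℝ} (hU : U * Uᵀ = 1) (i : ι) :
    ∑ k, U i k ^ 2 = 1 := by
  simpa [mul_apply, sq] using congr_fun₂ hU i i

lemma mul_diagonal_mul_transpose_apply (U : Matrix ι ι ℝ) (d : ι → ℝ) (i j : ι) :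
    (U * diagonal d * Uᵀ) i j = ∑ k, d k * (U i k * U j k) := by
  rw [mul_apply]
  simp only [mul_diagonal, transpose_apply]
  exact Finset.sum_congr rfl fun k _ => by ring

lemma transpose_mul_mul_diagonal_mul_transpose {U : Matrix ι ι ℝ} (hU : U * Uᵀ = 1)
    (d : ι → ℝ) : Uᵀ * (U * diagonal d * Uᵀ) = diagonal d * Uᵀ := by
  rw [← Matrix.mul_assoc, ← Matrix.mul_assoc, mul_eq_one_comm.mp hU, Matrix.one_mul]

lemma spectrum_mul_diagonal_mul_transpose {U : Matrix ι ι ℝ} (hU : U * Uᵀ = 1) (d : ι → ℝ) :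
    spectrum ℝ (U * diagonal d * Uᵀ) = range d := by
  let u : (Matrix ι ι ℝ)ˣ := ⟨U, Uᵀ, hU, mul_eq_one_comm.mp hU⟩
  rw [← spectrum_diagonal d]
  exact spectrum.units_conjugate (u := u)

lemma eq_diagonal_of_diagonal_mul_eq_mul_diagonal {d : ι → ℝ} (hd : Injective d)
    {W : Matrix ι ι ℝ} (h : diagonal d * W = W * diagonal d) :
    W = diagonal fun i => W i i := by
  ext i j
  rcases eq_or_ne i j with rfl | hij
  · simp
  · have hij' := congr_fun₂ h i j
    rw [diagonal_mul, mul_diagonal] at hij'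
    rw [diagonal_apply_ne _ hij]
    exact mul_left_cancel₀ (sub_ne_zero.mpr (hd.ne hij)) (by linear_combination hij')

lemma eq_of_mul_diagonal_mul_transpose_eq {d : ι → ℝ} (hd : Injective d) {U V : Matrix ι ι ℝ}
    (hU : U * Uᵀ = 1) (hV : V * Vᵀ = 1) (hUV : U * diagonal d * Uᵀ = V * diagonal d * Vᵀ)
    (i₀ : ι) (hU₀ : ∀ j, 0 < U i₀ j) (hV₀ : ∀ j, 0 < V i₀ j) : U = V := by
  set w : ι → ℝ := fun j => (Uᵀ * V) j j
  have hW : Uᵀ * V = diagonal w := by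
    refine eq_diagonal_of_diagonal_mul_eq_mul_diagonal hd ?_
    calc diagonal d * (Uᵀ * V) = Uᵀ * (U * diagonal d * Uᵀ) * V := by
          rw [transpose_mul_mul_diagonal_mul_transpose hU, Matrix.mul_assoc]
      _ = Uᵀ * V * diagonal d * (Vᵀ * V) := by rw [hUV]; simp only [Matrix.mul_assoc]
      _ = Uᵀ * V * diagonal d := by rw [mul_eq_one_comm.mp hV, Matrix.mul_one]
  have hVU : V = U * diagonal w := by rw [← hW, ← Matrix.mul_assoc, hU, Matrix.one_mul]
  have hw_sq : ∀ j, w j * w j = 1 := by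
    have : (Uᵀ * V)ᵀ * (Uᵀ * V) = 1 := by
      rw [transpose_mul, transpose_transpose, Matrix.mul_assoc, ← Matrix.mul_assoc U, hU,
        Matrix.one_mul, mul_eq_one_comm.mp hV]
    rw [hW, diagonal_transpose, diagonal_mul_diagonal, ← diagonal_one] at this
    exact fun j => by simpa using congr_fun₂ this j j
  have hw_pos : ∀ j, 0 < w j := fun j => by
    have hV₀j : V i₀ j = U i₀ j * w j := by rw [hVU, mul_diagonal]
    exact pos_of_mul_pos_right (hV₀j ▸ hV₀ j) (hU₀ j).le
  have hw : diagonal w = 1 := by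
    rw [← diagonal_one]
    exact congrArg diagonal (funext fun j => by nlinarith [hw_sq j, hw_pos j])
  rw [hVU, hw, Matrix.mul_one]

lemma mul_transpose_eq_one_of_orthonormal {e : ι → EuclideanSpace ℝ ι} (he : Orthonormal ℝ e) :
    (of fun i j => e i j) * (of fun i j => e i j)ᵀ = 1 := by
  ext i j
  simpa [mul_apply, one_apply, EuclideanSpace.inner_eq_star_dotProduct, dotProduct, mul_comm]
    using orthonormal_iff_ite.mp he i j

lemma of_mul_diagonal_mul_transpose_apply (e : ι → EuclideanSpace ℝ ι) (d : ι → ℝ) (i j : ι) :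
    ((of fun i j => e i j) * diagonal d * (of fun i j => e i j)ᵀ) i j =
      ⟪e i, toLpLin 2 2 (diagonal d) (e j)⟫_ℝ := by
  simp [mul_diagonal_mul_transpose_apply, EuclideanSpace.inner_eq_star_dotProduct, dotProduct,
    toLpLin_apply, mulVec_diagonal]
  exact Finset.sum_congr rfl fun k _ => by ring

end Matrix

lemma eq_of_smul_eq_smul_of_sum_sq_eq_one {ι : Type*} [Fintype ι] {u v : ι → ℝ}
    (hu : ∑ k, u k ^ 2 = 1) (hv : ∑ k, v k ^ 2 = 1) {a b : ℝ} (ha : a < 0) (hb : b < 0)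
    (h : a • u = b • v) : u = v := by
  have hsq : a ^ 2 = b ^ 2 := by
    have := congrArg (fun w : ι → ℝ => ∑ k, w k ^ 2) h
    simpa only [Pi.smul_apply, smul_eq_mul, mul_pow, ← Finset.mul_sum, hu, hv, mul_one]
      using this
  have hab : a = b := by nlinarith
  rw [hab] at h
  exact smul_right_injective _ hb.ne h

section Jacobi

variable {n : ℕ} {d : Fin n → ℝ} {H₁ H₂ U₁ U₂ : Matrix (Fin n) (Fin n) ℝ}

lemma sum_mul_apply_eq_of_eq_mul_diagonal_mul_transpose {H U : Matrix (Fin n) (Fin n) ℝ}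
    (hU : U * Uᵀ = 1) (hH : H = U * diagonal d * Uᵀ) (j k : Fin n) :
    ∑ m, H m j * U m k = d k * U j k := by
  have := congr_fun₂ (transpose_mul_mul_diagonal_mul_transpose hU d) k j
  rw [← hH, mul_apply, diagonal_mul] at this
  simpa only [transpose_apply, mul_comm (U _ k)] using this

lemma row_eq_of_forall_lt_row_eq (hU₁ : U₁ * U₁ᵀ = 1) (hH₁ : H₁ = U₁ * diagonal d * U₁ᵀ)
    (hU₂ : U₂ * U₂ᵀ = 1) (hH₂ : H₂ = U₂ * diagonal d * U₂ᵀ) {j j' : Fin n}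
    (hj : (j : ℕ) + 1 = j') (hH₁zero : ∀ m, j' < m → H₁ m j = 0)
    (hH₂zero : ∀ m, j' < m → H₂ m j = 0) (hH₁neg : H₁ j' j < 0) (hH₂neg : H₂ j' j < 0)
    (hrows : ∀ m < j', U₁ m = U₂ m) : U₁ j' = U₂ j' := by
  have hjj' : j < j' := Fin.lt_def.mpr (by omega)
  have hH : ∀ m < j', H₁ m j = H₂ m j := fun m hm => by
    simp only [hH₁, hH₂, mul_diagonal_mul_transpose_apply, hrows m hm, hrows j hjj']
  have hsmul : H₁ j' j • U₁ j' = H₂ j' j • U₂ j' := funext fun k => by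
    have hsum : ∑ m, (H₁ m j * U₁ m k - H₂ m j * U₂ m k) = 0 := by
      rw [Finset.sum_sub_distrib, sum_mul_apply_eq_of_eq_mul_diagonal_mul_transpose hU₁ hH₁,
        sum_mul_apply_eq_of_eq_mul_diagonal_mul_transpose hU₂ hH₂, hrows j hjj', sub_self]
    rw [Finset.sum_eq_single j'] at hsum
    · simpa [sub_eq_zero] using hsum
    · intro m _ hm
      rcases lt_or_gt_of_ne hm with hm | hm
      · rw [hH m hm, hrows m hm, sub_self]
      · rw [hH₁zero m hm, hH₂zero m hm]; ring
    · simp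
  exact eq_of_smul_eq_smul_of_sum_sq_eq_one (sum_sq_row_eq_one hU₁ j')
    (sum_sq_row_eq_one hU₂ j') hH₁neg hH₂neg hsmul

end Jacobi

lemma eq_of_row_zero_eq_of_isTridiagonal {n : ℕ} {d : Fin (n + 1) → ℝ}
    {H₁ H₂ U₁ U₂ : Matrix (Fin (n + 1)) (Fin (n + 1)) ℝ}
    (hU₁ : U₁ * U₁ᵀ = 1) (hH₁ : H₁ = U₁ * diagonal d * U₁ᵀ)
    (hU₂ : U₂ * U₂ᵀ = 1) (hH₂ : H₂ = U₂ * diagonal d * U₂ᵀ)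
    (ht₁ : IsTridiagonal H₁) (ht₂ : IsTridiagonal H₂)
    (hneg₁ : ∀ i j : Fin (n + 1), (j : ℕ) + 1 = i → H₁ i j < 0)
    (hneg₂ : ∀ i j : Fin (n + 1), (j : ℕ) + 1 = i → H₂ i j < 0)
    (h₀ : U₁ 0 = U₂ 0) : U₁ = U₂ := by
  funext k
  induction k using WellFoundedLT.induction with
  | ind k ih =>
    cases k using Fin.cases with
    | zero => exact h₀
    | succ i =>
      have hi : (i.castSucc : ℕ) + 1 = i.succ := rfl
      have hzero (H : Matrix (Fin (n + 1)) (Fin (n + 1)) ℝ) (ht : IsTridiagonal H) (m)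
          (hm : i.succ < m) : H m i.castSucc = 0 :=
        ht _ _ (Or.inr (by simpa [Fin.lt_def] using hm))
      exact row_eq_of_forall_lt_row_eq hU₁ hH₁ hU₂ hH₂ hi (hzero H₁ ht₁) (hzero H₂ ht₂)
        (hneg₁ _ _ hi) (hneg₂ _ _ hi) ih

section Krylov

open Submodule

variable {𝕜 E : Type*} [RCLike 𝕜] [NormedAddCommGroup E] [InnerProductSpace 𝕜 E]

section GramSchmidt

variable {ι : Type*} [LinearOrder ι] [LocallyFiniteOrderBot ι] [WellFoundedLT ι]

lemma inner_gramSchmidt_eq_zero_of_mem_span_Iio (v : ι → E) {i : ι} {w : E}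
    (hw : w ∈ span 𝕜 (v '' Iio i)) : inner 𝕜 (gramSchmidt 𝕜 v i) w = 0 := by
  have : span 𝕜 (v '' Iio i) ≤ (𝕜 ∙ gramSchmidt 𝕜 v i)ᗮ := by
    rw [span_le]
    rintro _ ⟨k, hk, rfl⟩
    exact mem_orthogonal_singleton_iff_inner_right.mpr (gramSchmidt_inv_triangular 𝕜 v hk)
  exact mem_orthogonal_singleton_iff_inner_right.mp (this hw)

lemma sub_gramSchmidt_mem_span_Iio (v : ι → E) (i : ι) :
    v i - gramSchmidt 𝕜 v i ∈ span 𝕜 (v '' Iio i) := by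
  rw [← span_gramSchmidt_Iio 𝕜 v i, gramSchmidt_def'' 𝕜 v i, add_sub_cancel_left]
  exact sum_mem fun k hk => smul_mem _ _ (subset_span (mem_image_of_mem _ (Finset.mem_Iio.mp hk)))

lemma inner_gramSchmidt_self_eq_norm_sq (v : ι → E) (i : ι) :
    inner 𝕜 (gramSchmidt 𝕜 v i) (v i) = (‖gramSchmidt 𝕜 v i‖ : 𝕜) ^ 2 := by
  rw [← sub_add_cancel (v i) (gramSchmidt 𝕜 v i), inner_add_right,
    inner_gramSchmidt_eq_zero_of_mem_span_Iio v (sub_gramSchmidt_mem_span_Iio v i), zero_add,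
    inner_self_eq_norm_sq_to_K]

end GramSchmidt

section GramSchmidtFin

variable {n : ℕ} {v : ℕ → E}

lemma gramSchmidt_ne_zero_of_linearIndependent_fin
    (hv : LinearIndependent 𝕜 fun k : Fin n => v k) {i : ℕ} (hi : i < n) : gramSchmidt 𝕜 v i ≠ 0 :=
  gramSchmidt_ne_zero_coe i
    (hv.comp (fun k : Iic i => ⟨k, lt_of_le_of_lt k.2 hi⟩) fun _ _ h =>
      Subtype.ext (congrArg Fin.val h))

lemma orthonormal_gramSchmidtNormed_fin (hv : LinearIndependent 𝕜 fun k : Fin n => v k) :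
    Orthonormal 𝕜 fun k : Fin n => gramSchmidtNormed 𝕜 v k := by
  refine ⟨fun k => ?_, fun a b hab => ?_⟩
  · simp only [gramSchmidtNormed,
      norm_smul_inv_norm (gramSchmidt_ne_zero_of_linearIndependent_fin hv k.2)]
  · simp [gramSchmidtNormed, inner_smul_left, inner_smul_right,
      gramSchmidt_orthogonal 𝕜 v (Fin.val_injective.ne hab)]

end GramSchmidtFin

def krylov (T : E →ₗ[𝕜] E) (x : E) (k : ℕ) : E := (T ^ k) x

variable (T : E →ₗ[𝕜] E) (x : E)

lemma krylov_succ (k : ℕ) : krylov T x (k + 1) = T (krylov T x k) := by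
  rw [krylov, pow_succ', Module.End.mul_apply, krylov]

lemma map_span_krylov_Iio_le (j : ℕ) :
    (span 𝕜 (krylov T x '' Iio j)).map T ≤ span 𝕜 (krylov T x '' Iio (j + 1)) := by
  rw [map_span, ← image_comp]
  apply span_mono
  rintro _ ⟨k, hk, rfl⟩
  exact ⟨k + 1, Nat.succ_lt_succ hk, krylov_succ T x k⟩

lemma inner_gramSchmidt_krylov_map_eq_zero {i j : ℕ} (h : j + 1 < i) :
    inner 𝕜 (gramSchmidt 𝕜 (krylov T x) i) (T (gramSchmidt 𝕜 (krylov T x) j)) = 0 := by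
  apply inner_gramSchmidt_eq_zero_of_mem_span_Iio
  have hj : gramSchmidt 𝕜 (krylov T x) j ∈ span 𝕜 (krylov T x '' Iio (j + 1)) := by
    rw [Iio_add_one_eq_Iic]
    exact gramSchmidt_mem_span 𝕜 _ le_rfl
  exact span_mono (image_mono (Iio_subset_Iio h))
    (map_span_krylov_Iio_le T x _ (mem_map_of_mem hj))

lemma inner_gramSchmidt_krylov_succ_map (j : ℕ) :
    inner 𝕜 (gramSchmidt 𝕜 (krylov T x) (j + 1)) (T (gramSchmidt 𝕜 (krylov T x) j)) =
      (‖gramSchmidt 𝕜 (krylov T x) (j + 1)‖ : 𝕜) ^ 2 := by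
  have hw := map_span_krylov_Iio_le T x j
    (mem_map_of_mem (sub_gramSchmidt_mem_span_Iio (𝕜 := 𝕜) (krylov T x) j))
  rw [← sub_sub_cancel (krylov T x j) (gramSchmidt 𝕜 (krylov T x) j), map_sub, ← krylov_succ,
    inner_sub_right, inner_gramSchmidt_eq_zero_of_mem_span_Iio _ hw, sub_zero,
    inner_gramSchmidt_self_eq_norm_sq]

end Krylov

section RealKrylov

variable {E : Type*} [NormedAddCommGroup E] [InnerProductSpace ℝ E] (T : E →ₗ[ℝ] E) (x : E)

lemma inner_gramSchmidtNormed_krylov_map_eq_zero {i j : ℕ} (h : j + 1 < i) :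
    ⟪gramSchmidtNormed ℝ (krylov T x) i, T (gramSchmidtNormed ℝ (krylov T x) j)⟫_ℝ = 0 := by
  simp [gramSchmidtNormed, real_inner_smul_left, real_inner_smul_right,
    inner_gramSchmidt_krylov_map_eq_zero T x h]

lemma inner_gramSchmidtNormed_krylov_succ_map_pos {j : ℕ}
    (hj : gramSchmidt ℝ (krylov T x) j ≠ 0) (hj' : gramSchmidt ℝ (krylov T x) (j + 1) ≠ 0) :
    0 < ⟪gramSchmidtNormed ℝ (krylov T x) (j + 1),
      T (gramSchmidtNormed ℝ (krylov T x) j)⟫_ℝ := by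
  simp only [gramSchmidtNormed, map_smul, real_inner_smul_left, real_inner_smul_right,
    inner_gramSchmidt_krylov_succ_map]
  have := norm_pos_iff.mpr hj
  have := norm_pos_iff.mpr hj'
  positivity

end RealKrylov

lemma krylov_toLpLin_diagonal_apply {ι : Type*} [Fintype ι] [DecidableEq ι] (c x : ι → ℝ)
    (k : ℕ) (i : ι) :
    krylov (toLpLin 2 2 (diagonal c)) (WithLp.toLp 2 x) k i = c i ^ k * x i := by
  induction k with
  | zero => simp [krylov]
  | succ k ih => rw [krylov_succ, toLpLin_apply]; simp [mulVec_diagonal, ih, pow_succ]; ring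

lemma linearIndependent_krylov_toLpLin_diagonal {n : ℕ} {c x : Fin n → ℝ} (hc : Injective c)
    (hx : ∀ i, x i ≠ 0) :
    LinearIndependent ℝ fun k : Fin n =>
      krylov (toLpLin 2 2 (diagonal c)) (WithLp.toLp 2 x) k := by
  have hdet : ((vandermonde c)ᵀ * diagonal x).det ≠ 0 := by
    rw [det_mul, det_transpose, det_diagonal]
    exact mul_ne_zero (det_vandermonde_ne_zero_iff.mpr hc)
      (Finset.prod_ne_zero_iff.mpr fun i _ => hx i)
  have hrows := linearIndependent_rows_of_det_ne_zero hdet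
  have hfam : (fun k : Fin n => krylov (toLpLin 2 2 (diagonal c)) (WithLp.toLp 2 x) k) =
      (WithLp.linearEquiv 2 ℝ (Fin n → ℝ)).symm.toLinearMap ∘
        fun k => ((vandermonde c)ᵀ * diagonal x) k := by
    funext k
    ext i
    simp [krylov_toLpLin_diagonal_apply, vandermonde, mul_diagonal]
  rw [hfam]
  exact hrows.map' _ (LinearEquiv.ker _)

lemma mul_diagonal_mul_transpose_mem_TLam {n : ℕ} {d : Fin n → ℝ} {U : Matrix (Fin n) (Fin n) ℝ}
    (hU : U * Uᵀ = 1)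
    (hzero : ∀ i j : Fin n, (j : ℕ) + 1 < i → (U * diagonal d * Uᵀ) i j = 0)
    (hneg : ∀ i j : Fin n, (j : ℕ) + 1 = i → (U * diagonal d * Uᵀ) i j < 0) :
    U * diagonal d * Uᵀ ∈ TLam d := by
  have hsymm : (U * diagonal d * Uᵀ).IsSymm := by
    simp [IsSymm, transpose_mul, Matrix.mul_assoc]
  refine ⟨hsymm, fun i j hij => ?_, hneg, spectrum_mul_diagonal_mul_transpose hU d⟩
  rcases hij with h | h
  · rw [← hsymm.apply, hzero j i h]
  · exact hzero i j h

lemma exists_orthogonal_row_zero_eq_mem_TLam {n : ℕ} {d : Fin (n + 1) → ℝ} (hd : Injective d)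
    {x : Fin (n + 1) → ℝ} (hx : x ∈ SposSet (n + 1)) :
    ∃ U : Matrix (Fin (n + 1)) (Fin (n + 1)) ℝ,
      U * Uᵀ = 1 ∧ U 0 = x ∧ U * diagonal d * Uᵀ ∈ TLam d := by
  -- Lanczos for `-D`: Gram–Schmidt makes `⟪e_{j+1}, -D e_j⟫` positive, i.e. the subdiagonal of
  -- `D` in the basis `e` negative.
  set T := toLpLin 2 2 (diagonal (-d))
  set v := krylov T (WithLp.toLp 2 x)
  have hv : LinearIndependent ℝ fun k : Fin (n + 1) => v k :=
    linearIndependent_krylov_toLpLin_diagonal (neg_injective.comp hd) fun i => (hx.2 i).ne'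
  set e : Fin (n + 1) → EuclideanSpace ℝ (Fin (n + 1)) := fun k => gramSchmidtNormed ℝ v k
  have hU := mul_transpose_eq_one_of_orthonormal (orthonormal_gramSchmidtNormed_fin hv)
  have hentry (i j) : ((of fun i j => e i j) * diagonal d * (of fun i j => e i j)ᵀ) i j =
      -⟪e i, T (e j)⟫_ℝ := by
    have hT : T = -toLpLin 2 2 (diagonal d) := by rw [← map_neg, diagonal_neg]; rfl
    rw [of_mul_diagonal_mul_transpose_apply, hT, LinearMap.neg_apply, inner_neg_right, neg_neg]
  refine ⟨_, hU, funext fun j => ?_, mul_diagonal_mul_transpose_mem_TLam hU (fun i j h => ?_)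
    (fun i j h => ?_)⟩
  · have hnorm : ‖WithLp.toLp 2 x‖ = 1 := by simp [EuclideanSpace.norm_eq, hx.1]
    have h₀ : gramSchmidt ℝ v 0 = WithLp.toLp 2 x := gramSchmidt_bot ℝ v
    show gramSchmidtNormed ℝ v 0 j = x j
    simp [gramSchmidtNormed, h₀, hnorm]
  · rw [hentry, inner_gramSchmidtNormed_krylov_map_eq_zero T _ h, neg_zero]
  · rw [hentry, neg_lt_zero]
    show 0 < ⟪gramSchmidtNormed ℝ v i, T (gramSchmidtNormed ℝ v j)⟫_ℝ
    rw [← h]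
    exact inner_gramSchmidtNormed_krylov_succ_map_pos T _
      (gramSchmidt_ne_zero_of_linearIndependent_fin hv j.2)
      (gramSchmidt_ne_zero_of_linearIndependent_fin hv (h ▸ i.2))

/-- The map `φ` sending `H ∈ T_Λ` to the (positive) first row of the unique orthogonal
matrix `U` with `H = U diag(λ) Uᵀ` and `U(1,j) > 0` for all `j` is a bijection from `T_Λ`
onto `S^{n-1}_{>0}`. -/
theorem phi_bijOn
    (n : ℕ) (hn : 1 ≤ n) (lams : Fin n → ℝ) (hanti : StrictAnti lams)
    (phi : Matrix (Fin n) (Fin n) ℝ → (Fin n → ℝ))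
    (hphi : ∀ H ∈ TLam lams, ∃ U : Matrix (Fin n) (Fin n) ℝ,
      U * Uᵀ = 1 ∧ Uᵀ * U = 1 ∧ H = U * Matrix.diagonal lams * Uᵀ ∧
      (∀ j, 0 < U ⟨0, by omega⟩ j) ∧ phi H = fun j => U ⟨0, by omega⟩ j) :
    Set.BijOn phi (TLam lams) (SposSet n) := by
  obtain ⟨m, rfl⟩ : ∃ m, n = m + 1 := ⟨n - 1, by omega⟩
  simp only [Fin.zero_eta] at hphi
  refine ⟨fun H hH => ?_, fun H₁ hH₁ H₂ hH₂ hφ => ?_, fun x hx => ?_⟩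
  · obtain ⟨U, hU, -, -, hU₀, hφ⟩ := hphi H hH
    rw [hφ]
    exact ⟨sum_sq_row_eq_one hU 0, hU₀⟩
  · obtain ⟨U₁, hU₁, -, hH₁U, -, hφ₁⟩ := hphi H₁ hH₁
    obtain ⟨U₂, hU₂, -, hH₂U, -, hφ₂⟩ := hphi H₂ hH₂
    have h₀ : U₁ 0 = U₂ 0 := hφ₁.symm.trans (hφ.trans hφ₂)
    rw [hH₁U, hH₂U, eq_of_row_zero_eq_of_isTridiagonal hU₁ hH₁U hU₂ hH₂U hH₁.2.1 hH₂.2.1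
      hH₁.2.2.1 hH₂.2.2.1 h₀]
  · obtain ⟨U, hU, hU₀, hH⟩ := exists_orthogonal_row_zero_eq_mem_TLam hanti.injective hx
    obtain ⟨V, hV, -, hUV, hV₀, hφ⟩ := hphi _ hH
    refine ⟨_, hH, ?_⟩
    rw [hφ, ← eq_of_mul_diagonal_mul_transpose_eq hanti.injective hU hV hUV 0 (hU₀ ▸ hx.2) hV₀,
      hU₀]
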